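/- In a vertex-minimal graph G with no (F_3,F_4)-partition, there is no triangle xyz with deg(x) = 3, deg(y) ≤ 5, deg(z) ≤ 5 such that the third neighbor x′ of x (the one off the triangle) has deg(x′) ≤ 4. -/

import Mathlib

open SimpleGraph Finset

namespace SimpleGraph
variable {V : Type*} {G : SimpleGraph V}

/-- Auxiliary predicate: every cycle of `G` has a vertex outside `s`. -/
def NoCycIn (G : SimpleGraph V) (s : Set V) : Prop :=
  ∀ ⦃v : V⦄ (c : G.Walk v v), c.IsCycle → ∃ u ∈ c.support, u ∉ s

/-- Lift a walk whose support lies in `s` to the induced graph on `s`. -/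
def Walk.induceLift {s : Set V} :
    ∀ {v w : V} (p : G.Walk v w) (hp : ∀ u ∈ p.support, u ∈ s),
      (G.induce s).Walk ⟨v, hp v p.start_mem_support⟩ ⟨w, hp w p.end_mem_support⟩
  | _, _, Walk.nil, _ => Walk.nil
  | _, _, Walk.cons h p, hp =>
      Walk.cons (by simpa using h)
        (p.induceLift fun u hu => hp u (by simp [Walk.support_cons, hu]))

lemma Walk.induceLift_map {s : Set V} : ∀ {v w : V} (p : G.Walk v w)
    (hp : ∀ u ∈ p.support, u ∈ s),
    (p.induceLift hp).map (Embedding.induce s : G.induce s ↪g G).toHom = p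
  | _, _, Walk.nil, _ => rfl
  | _, _, Walk.cons h p, hp => by
      simp only [Walk.induceLift, Walk.map_cons]
      congr 1
      exact Walk.induceLift_map p _

lemma noCycIn_iff_isAcyclic_induce {s : Set V} :
    G.NoCycIn s ↔ (G.induce s).IsAcyclic := by
  constructor
  · intro h v c hc
    have hinj : Function.Injective ((Embedding.induce s : G.induce s ↪g G)).toHom :=
      (Embedding.induce s : G.induce s ↪g G).injective
    have hc' := hc.map hinj
    obtain ⟨u, hu, hus⟩ := h (c.map (Embedding.induce s : G.induce s ↪g G).toHom) hc'
    apply hus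
    rw [Walk.support_map] at hu
    obtain ⟨⟨u', hu'⟩, _, rfl⟩ := List.mem_map.mp hu
    exact hu'
  · intro h v c hc
    by_contra hcon
    push_neg at hcon
    have hc' : (c.induceLift hcon).IsCycle := by
      have hinj : Function.Injective ((Embedding.induce s : G.induce s ↪g G)).toHom :=
        (Embedding.induce s : G.induce s ↪g G).injective
      rw [← SimpleGraph.Walk.map_isCycle_iff_of_injective hinj, Walk.induceLift_map]
      exact hc
    exact h _ hc'

lemma NoCycIn.anti {s t : Set V} (hst : s ⊆ t) (h : G.NoCycIn t) : G.NoCycIn s := by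
  intro v c hc
  obtain ⟨u, hu, hut⟩ := h c hc
  exact ⟨u, hu, fun hus => hut (hst hus)⟩

lemma exists_two_nbrs {x : V} {c : G.Walk x x} (hc : c.IsCycle) :
    ∃ u v, G.Adj x u ∧ G.Adj x v ∧ u ≠ v ∧ u ∈ c.support ∧ v ∈ c.support := by
  cases c with
  | nil => exact absurd rfl hc.ne_nil
  | @cons _ u _ h p =>
    have hp : ¬p.Nil := by
      have h3 := hc.three_le_length
      rw [Walk.length_cons] at h3
      rw [Walk.nil_iff_length_eq]
      omega
    have hprev : ¬p.reverse.Nil := by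
      rw [Walk.nil_iff_length_eq, Walk.length_reverse]
      rw [Walk.nil_iff_length_eq] at hp
      exact hp
    obtain ⟨v, h2, q, hq⟩ := Walk.not_nil_iff.mp hprev
    have hvp : v ∈ p.support := by
      have : v ∈ p.reverse.support := by
        rw [hq, Walk.support_cons]
        exact List.mem_cons_of_mem _ q.start_mem_support
      rwa [Walk.support_reverse, List.mem_reverse] at this
    have hedge : s(x, v) ∈ p.edges := by
      have : s(x, v) ∈ p.reverse.edges := by
        rw [hq, Walk.edges_cons]
        exact List.mem_cons_self
      rwa [Walk.edges_reverse, List.mem_reverse] at this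
    have huv : u ≠ v := by
      rintro rfl
      have hnd := hc.edges_nodup
      rw [Walk.edges_cons] at hnd
      exact (List.nodup_cons.mp hnd).1 hedge
    exact ⟨u, v, h, h2, huv, by
      rw [Walk.support_cons]; exact List.mem_cons_of_mem _ p.start_mem_support, by
      rw [Walk.support_cons]; exact List.mem_cons_of_mem _ hvp⟩

variable [DecidableEq V] [Fintype V] [DecidableRel G.Adj]

lemma NoCycIn.insert_pendant {A : Finset V} {x : V} (hA : G.NoCycIn ↑A)
    (h1 : (G.neighborFinset x ∩ A).card ≤ 1) : G.NoCycIn (↑(insert x A) : Set V) := by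
  intro v c hc
  by_contra hcon
  push_neg at hcon
  simp only [Finset.coe_insert, Set.mem_insert_iff, Finset.mem_coe] at hcon
  by_cases hx : x ∈ c.support
  · have hc' := hc.rotate hx
    obtain ⟨u, w, hu, hw, huw, hus, hws⟩ := exists_two_nbrs hc'
    have hmem : ∀ a, G.Adj x a → a ∈ (c.rotate x hx).support → a ∈ A := by
      intro a ha has
      have hane : a ≠ x := ha.ne'
      have : a ∈ (c.rotate x hx).support.tail := by
        rw [(c.rotate x hx).support_eq_cons] at has
        rcases List.mem_cons.mp has with h' | h'
        · exact absurd h' hane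
        · exact h'
      have : a ∈ c.support.tail := (Walk.support_rotate c x hx).mem_iff.mp this
      have : a ∈ c.support := List.mem_of_mem_tail this
      rcases hcon a this with h' | h'
      · exact absurd h' hane
      · exact h'
    have huA : u ∈ A := hmem u hu hus
    have hwA : w ∈ A := hmem w hw hws
    have hsub : ({u, w} : Finset V) ⊆ G.neighborFinset x ∩ A := by
      intro a ha
      rcases Finset.mem_insert.mp ha with rfl | ha
      · exact Finset.mem_inter.mpr ⟨(G.mem_neighborFinset x a).mpr hu, huA⟩
      · rw [Finset.mem_singleton] at ha
        subst ha
        exact Finset.mem_inter.mpr ⟨(G.mem_neighborFinset x a).mpr hw, hwA⟩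
    have h2 : 2 ≤ (G.neighborFinset x ∩ A).card := by
      calc 2 = ({u, w} : Finset V).card := (Finset.card_pair huw).symm
      _ ≤ _ := Finset.card_le_card hsub
    omega
  · have hsupp : ∀ u ∈ c.support, u ∈ (↑A : Set V) := by
      intro u hu
      rcases hcon u hu with rfl | h'
      · exact absurd hu hx
      · exact h'
    obtain ⟨u, hu, hu'⟩ := hA c hc
    exact hu' (hsupp u hu)

lemma acyclic_insert_pendant {A : Finset V} {x : V}
    (hA : (G.induce (↑A : Set V)).IsAcyclic)
    (h1 : (G.neighborFinset x ∩ A).card ≤ 1) :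
    (G.induce (↑(insert x A) : Set V)).IsAcyclic :=
  noCycIn_iff_isAcyclic_induce.mp
    ((noCycIn_iff_isAcyclic_induce.mpr hA).insert_pendant h1)

omit [DecidableEq V] [Fintype V] [DecidableRel G.Adj] in
lemma acyclic_induce_anti {A B : Finset V} (hAB : A ⊆ B)
    (hB : (G.induce (↑B : Set V)).IsAcyclic) :
    (G.induce (↑A : Set V)).IsAcyclic :=
  noCycIn_iff_isAcyclic_induce.mp
    ((noCycIn_iff_isAcyclic_induce.mpr hB).anti (by exact_mod_cast hAB))

lemma card_inter_insert_le (v x : V) (A : Finset V) :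
    (G.neighborFinset v ∩ insert x A).card ≤
      (G.neighborFinset v ∩ A).card + (if G.Adj v x then 1 else 0) := by
  by_cases h : G.Adj v x
  · simp only [h, if_true]
    refine le_trans (Finset.card_le_card
      (t := insert x (G.neighborFinset v ∩ A)) ?_) (Finset.card_insert_le _ _)
    intro a ha
    simp only [Finset.mem_inter, Finset.mem_insert] at ha ⊢
    tauto
  · simp only [h, if_false, Nat.add_zero]
    apply le_of_eq
    congr 1
    ext a
    simp only [Finset.mem_inter, Finset.mem_insert, SimpleGraph.mem_neighborFinset]
    constructor
    · rintro ⟨ha, rfl | ha2⟩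
      · exact absurd ha h
      · exact ⟨ha, ha2⟩
    · rintro ⟨ha, ha2⟩
      exact ⟨ha, Or.inr ha2⟩

end SimpleGraph

/-- `A` (playing the role of `A₃`) together with `S \ A` (playing the role of `A₄`)
is an `(𝓕₃,𝓕₄)`-partition of the subgraph of `G` induced on the vertex set `S`:
`A` induces a forest of maximum degree at most `3` and `S \ A` induces a forest of
maximum degree at most `4`. -/
def FFPartOn {V : Type*} [Fintype V] [DecidableEq V] (G : SimpleGraph V)
    [DecidableRel G.Adj] (S A : Finset V) : Prop :=
  A ⊆ S ∧
  (∀ v ∈ A, (G.neighborFinset v ∩ A).card ≤ 3) ∧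
  (∀ v ∈ S \ A, (G.neighborFinset v ∩ (S \ A)).card ≤ 4) ∧
  (G.induce (↑A : Set V)).IsAcyclic ∧
  (G.induce (↑(S \ A) : Set V)).IsAcyclic

/-- `G` is a vertex-minimal graph admitting no `(𝓕₃,𝓕₄)`-partition: `G` itself has no
`(𝓕₃,𝓕₄)`-partition, but for every vertex `v` the graph `G - v` has one. -/
def MinimalNoFF {V : Type*} [Fintype V] [DecidableEq V] (G : SimpleGraph V)
    [DecidableRel G.Adj] : Prop :=
  (¬ ∃ A : Finset V, FFPartOn G Finset.univ A) ∧
  (∀ v : V, ∃ A : Finset V, FFPartOn G (Finset.univ \ {v}) A)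

section Extend
variable {V : Type*} [Fintype V] [DecidableEq V] {G : SimpleGraph V} [DecidableRel G.Adj]

lemma ffpart_extendA {x : V} {A : Finset V} (hA : FFPartOn G (Finset.univ \ {x}) A)
    (h1 : (G.neighborFinset x ∩ A).card ≤ 1)
    (h2 : ∀ u ∈ G.neighborFinset x ∩ A, (G.neighborFinset u ∩ A).card ≤ 2) :
    FFPartOn G Finset.univ (insert x A) := by
  obtain ⟨hsub, hdA, hdB, haA, haB⟩ := hA
  have hBeq : Finset.univ \ insert x A = (Finset.univ \ {x}) \ A := by
    ext v
    simp only [Finset.mem_sdiff, Finset.mem_univ, Finset.mem_insert, Finset.mem_singleton,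
      true_and, not_or]
  refine ⟨Finset.subset_univ _, ?_, ?_, ?_, ?_⟩
  · intro v hv
    rcases Finset.mem_insert.mp hv with rfl | hv
    · have hle := G.card_inter_insert_le v v A
      rw [if_neg (G.irrefl)] at hle
      omega
    · by_cases hadj : G.Adj v x
      · have hv2 : v ∈ G.neighborFinset x ∩ A :=
          Finset.mem_inter.mpr ⟨(G.mem_neighborFinset x v).mpr hadj.symm, hv⟩
        have hle := G.card_inter_insert_le v x A
        simp only [hadj, if_true] at hle
        have := h2 v hv2
        omega
      · have hle := G.card_inter_insert_le v x A
        simp only [hadj, if_false, Nat.add_zero] at hle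
        have := hdA v hv
        omega
  · intro v hv
    rw [hBeq] at hv ⊢
    exact hdB v hv
  · exact acyclic_insert_pendant haA h1
  · rw [hBeq]
    exact haB

lemma ffpart_extendB {x : V} {A : Finset V} (hA : FFPartOn G (Finset.univ \ {x}) A)
    (h1 : (G.neighborFinset x ∩ ((Finset.univ \ {x}) \ A)).card ≤ 1)
    (h2 : ∀ u ∈ G.neighborFinset x ∩ ((Finset.univ \ {x}) \ A),
      (G.neighborFinset u ∩ ((Finset.univ \ {x}) \ A)).card ≤ 3) :
    FFPartOn G Finset.univ A := by
  obtain ⟨hsub, hdA, hdB, haA, haB⟩ := hA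
  have hxA : x ∉ A := by
    intro h
    simpa using hsub h
  have hBeq : Finset.univ \ A = insert x ((Finset.univ \ {x}) \ A) := by
    ext v
    by_cases hv : v = x <;>
      simp only [hv, Finset.mem_sdiff, Finset.mem_univ, Finset.mem_insert, Finset.mem_singleton,
        true_and, hxA, not_false_eq_true, true_or, not_true, false_and, or_false,
        not_false_iff] <;> tauto
  refine ⟨Finset.subset_univ _, hdA, ?_, haA, ?_⟩
  · intro v hv
    rw [hBeq] at hv ⊢
    rcases Finset.mem_insert.mp hv with rfl | hv
    · have hle := G.card_inter_insert_le v v ((Finset.univ \ {v}) \ A)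
      rw [if_neg (G.irrefl)] at hle
      omega
    · by_cases hadj : G.Adj v x
      · have hv2 : v ∈ G.neighborFinset x ∩ ((Finset.univ \ {x}) \ A) :=
          Finset.mem_inter.mpr ⟨(G.mem_neighborFinset x v).mpr hadj.symm, hv⟩
        have hle := G.card_inter_insert_le v x ((Finset.univ \ {x}) \ A)
        simp only [hadj, if_true] at hle
        have := h2 v hv2
        omega
      · have hle := G.card_inter_insert_le v x ((Finset.univ \ {x}) \ A)
        simp only [hadj, if_false, Nat.add_zero] at hle
        have := hdB v hv
        omega
  · rw [hBeq]
    exact acyclic_insert_pendant haB h1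

lemma ffpart_move {x u : V} {A : Finset V} (hA : FFPartOn G (Finset.univ \ {x}) A)
    (hu : u ∈ A)
    (hxu : G.neighborFinset x ∩ A = {u})
    (h1 : (G.neighborFinset u ∩ ((Finset.univ \ {x}) \ A)).card ≤ 1)
    (h2 : ∀ w ∈ G.neighborFinset u ∩ ((Finset.univ \ {x}) \ A),
      (G.neighborFinset w ∩ ((Finset.univ \ {x}) \ A)).card ≤ 3) :
    FFPartOn G Finset.univ (insert x (A.erase u)) := by
  obtain ⟨hsub, hdA, hdB, haA, haB⟩ := hA
  have hux : u ≠ x := by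
    intro h
    subst h
    simpa using hsub hu
  have hxA : x ∉ A := by
    intro h
    simpa using hsub h
  have hBeq : Finset.univ \ insert x (A.erase u) = insert u ((Finset.univ \ {x}) \ A) := by
    ext v
    by_cases hvu : v = u <;> by_cases hvx : v = x <;>
      simp only [hvu, hvx, Finset.mem_sdiff, Finset.mem_univ, Finset.mem_insert,
        Finset.mem_erase, Finset.mem_singleton, true_and, not_or, not_and, not_not] <;>
      tauto
  have hxe : G.neighborFinset x ∩ (A.erase u) = ∅ := by
    ext a
    simp only [Finset.mem_inter, Finset.mem_erase, Finset.notMem_empty, iff_false, not_and]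
    intro ha hane
    intro haA'
    have : a ∈ G.neighborFinset x ∩ A := Finset.mem_inter.mpr ⟨ha, haA'⟩
    rw [hxu] at this
    exact hane (Finset.mem_singleton.mp this)
  refine ⟨Finset.subset_univ _, ?_, ?_, ?_, ?_⟩
  · intro v hv
    rcases Finset.mem_insert.mp hv with rfl | hv
    · have hle := G.card_inter_insert_le v v (A.erase u)
      rw [if_neg (G.irrefl), hxe] at hle
      simp only [Finset.card_empty] at hle
      omega
    · obtain ⟨hvne, hvA⟩ := Finset.mem_erase.mp hv
      have hnadj : ¬ G.Adj v x := by
        intro h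
        have : v ∈ G.neighborFinset x ∩ A :=
          Finset.mem_inter.mpr ⟨(G.mem_neighborFinset x v).mpr h.symm, hvA⟩
        rw [hxu] at this
        exact hvne (Finset.mem_singleton.mp this)
      have hle := G.card_inter_insert_le v x (A.erase u)
      simp only [hnadj, if_false, Nat.add_zero] at hle
      have hmono : (G.neighborFinset v ∩ A.erase u).card ≤ (G.neighborFinset v ∩ A).card :=
        Finset.card_le_card (Finset.inter_subset_inter (Finset.Subset.refl _) (Finset.erase_subset _ _))
      have := hdA v hvA
      omega
  · intro v hv
    rw [hBeq] at hv ⊢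
    rcases Finset.mem_insert.mp hv with rfl | hv
    · have hle := G.card_inter_insert_le v v ((Finset.univ \ {x}) \ A)
      rw [if_neg (G.irrefl)] at hle
      omega
    · by_cases hadj : G.Adj v u
      · have hv2 : v ∈ G.neighborFinset u ∩ ((Finset.univ \ {x}) \ A) :=
          Finset.mem_inter.mpr ⟨(G.mem_neighborFinset u v).mpr hadj.symm, hv⟩
        have hle := G.card_inter_insert_le v u ((Finset.univ \ {x}) \ A)
        simp only [hadj, if_true] at hle
        have := h2 v hv2
        omega
      · have hle := G.card_inter_insert_le v u ((Finset.univ \ {x}) \ A)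
        simp only [hadj, if_false, Nat.add_zero] at hle
        have := hdB v hv
        omega
  · have base : (G.induce (↑(A.erase u) : Set V)).IsAcyclic :=
      acyclic_induce_anti (Finset.erase_subset _ _) haA
    exact acyclic_insert_pendant base (by rw [hxe]; simp)
  · rw [hBeq]
    exact acyclic_insert_pendant haB h1


lemma card_le_degree_of_subset {v : V} {T : Finset V} (h : T ⊆ G.neighborFinset v) :
    T.card ≤ G.degree v := by
  rw [← SimpleGraph.card_neighborFinset_eq_degree]
  exact Finset.card_le_card h

lemma loneA_y {x y z x' : V} {A : Finset V}
    (hno : ¬ ∃ A : Finset V, FFPartOn G Finset.univ A)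
    (hA : FFPartOn G (Finset.univ \ {x}) A)
    (hxy : G.Adj x y) (hyz : G.Adj y z) (hzx : G.Adj z x) (hx'x : x' ≠ x)
    (hN : G.neighborFinset x = {x', y, z})
    (hdy : G.degree y ≤ 5) (hdz : G.degree z ≤ 5)
    (hyA : y ∈ A) (hzA : z ∉ A) (hx'A : x' ∉ A) : False := by
  have hxA : x ∉ A := by intro h; simpa using hA.1 h
  have hzB : z ∈ (Finset.univ \ {x}) \ A := by
    simp only [Finset.mem_sdiff, Finset.mem_univ, Finset.mem_singleton, true_and]
    exact ⟨hzx.ne, hzA⟩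
  have hxB : x ∉ (Finset.univ \ {x}) \ A := by simp
  have hyB : y ∉ (Finset.univ \ {x}) \ A := by
    simp only [Finset.mem_sdiff, not_and]
    intro _
    simp [hyA]
  have hNxA : G.neighborFinset x ∩ A = {y} := by
    rw [hN]
    ext a
    simp only [Finset.mem_inter, Finset.mem_insert, Finset.mem_singleton]
    constructor
    · rintro ⟨rfl | rfl | rfl, ha⟩
      · exact absurd ha hx'A
      · rfl
      · exact absurd ha hzA
    · rintro rfl
      exact ⟨Or.inr (Or.inl rfl), hyA⟩
  by_cases hcase : (G.neighborFinset y ∩ A).card ≤ 2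
  · apply hno
    refine ⟨insert x A, ffpart_extendA hA (by rw [hNxA]; simp) ?_⟩
    intro u hu
    rw [hNxA, Finset.mem_singleton] at hu
    subst hu
    exact hcase
  have hdAy : (G.neighborFinset y ∩ A).card = 3 := by
    have := hA.2.1 y hyA
    omega
  have hdisj : Disjoint (G.neighborFinset y ∩ A)
      (G.neighborFinset y ∩ ((Finset.univ \ {x}) \ A)) := by
    refine Disjoint.mono (Finset.inter_subset_right) (Finset.inter_subset_right) ?_
    exact Finset.sdiff_disjoint.symm
  have hxnotin : x ∉ G.neighborFinset y ∩ A ∪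
      G.neighborFinset y ∩ ((Finset.univ \ {x}) \ A) := by
    simp only [Finset.mem_union, Finset.mem_inter, not_or, not_and]
    exact ⟨fun _ => hxA, fun _ => hxB⟩
  have hTsub : insert x (G.neighborFinset y ∩ A ∪
      G.neighborFinset y ∩ ((Finset.univ \ {x}) \ A)) ⊆ G.neighborFinset y := by
    intro a ha
    rcases Finset.mem_insert.mp ha with rfl | ha
    · exact (G.mem_neighborFinset y a).mpr hxy.symm
    · rcases Finset.mem_union.mp ha with h | h
      · exact Finset.mem_inter.mp h |>.1
      · exact Finset.mem_inter.mp h |>.1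
  have hcardT := card_le_degree_of_subset hTsub
  rw [Finset.card_insert_of_notMem hxnotin, Finset.card_union_of_disjoint hdisj, hdAy] at hcardT
  have hcard1 : (G.neighborFinset y ∩ ((Finset.univ \ {x}) \ A)).card ≤ 1 := by omega
  have hzNyB : z ∈ G.neighborFinset y ∩ ((Finset.univ \ {x}) \ A) :=
    Finset.mem_inter.mpr ⟨(G.mem_neighborFinset y z).mpr hyz, hzB⟩
  have hNyB : G.neighborFinset y ∩ ((Finset.univ \ {x}) \ A) = {z} := by
    apply Finset.Subset.antisymm
    · intro a ha
      rw [Finset.mem_singleton]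
      exact Finset.card_le_one.mp hcard1 a ha z hzNyB
    · exact Finset.singleton_subset_iff.mpr hzNyB
  by_cases hzdeg : (G.neighborFinset z ∩ ((Finset.univ \ {x}) \ A)).card ≤ 3
  · apply hno
    refine ⟨_, ffpart_move hA hyA hNxA (by rw [hNyB]; simp) ?_⟩
    intro w hw
    rw [hNyB, Finset.mem_singleton] at hw
    subst hw
    exact hzdeg
  · have hd4 : (G.neighborFinset z ∩ ((Finset.univ \ {x}) \ A)).card = 4 := by
      have := hA.2.2.1 z hzB
      omega
    have hynotin : y ∉ G.neighborFinset z ∩ ((Finset.univ \ {x}) \ A) := by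
      simp only [Finset.mem_inter, not_and]
      exact fun _ => hyB
    have hxnotin2 : x ∉ insert y (G.neighborFinset z ∩ ((Finset.univ \ {x}) \ A)) := by
      simp only [Finset.mem_insert, Finset.mem_inter, not_or, not_and]
      exact ⟨fun h => hxy.ne h, fun _ => hxB⟩
    have hTsub2 : insert x (insert y (G.neighborFinset z ∩ ((Finset.univ \ {x}) \ A))) ⊆
        G.neighborFinset z := by
      intro a ha
      rcases Finset.mem_insert.mp ha with rfl | ha
      · exact (G.mem_neighborFinset z a).mpr hzx
      · rcases Finset.mem_insert.mp ha with rfl | ha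
        · exact (G.mem_neighborFinset z a).mpr hyz.symm
        · exact Finset.mem_inter.mp ha |>.1
    have hc := card_le_degree_of_subset hTsub2
    rw [Finset.card_insert_of_notMem hxnotin2, Finset.card_insert_of_notMem hynotin, hd4]
      at hc
    omega

lemma loneB_y {x y z x' : V} {A : Finset V}
    (hno : ¬ ∃ A : Finset V, FFPartOn G Finset.univ A)
    (hA : FFPartOn G (Finset.univ \ {x}) A)
    (hxy : G.Adj x y) (hyz : G.Adj y z) (hx'x : x' ≠ x)
    (hN : G.neighborFinset x = {x', y, z})
    (hdy : G.degree y ≤ 5)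
    (hyA : y ∉ A) (hzA : z ∈ A) (hx'A : x' ∈ A) : False := by
  have hyB : y ∈ (Finset.univ \ {x}) \ A := by
    simp only [Finset.mem_sdiff, Finset.mem_univ, Finset.mem_singleton, true_and]
    exact ⟨hxy.ne', hyA⟩
  have hxB : x ∉ (Finset.univ \ {x}) \ A := by simp
  have hzB : z ∉ (Finset.univ \ {x}) \ A := by
    simp only [Finset.mem_sdiff, not_and]
    intro _
    simp [hzA]
  have hx'B : x' ∉ (Finset.univ \ {x}) \ A := by
    simp only [Finset.mem_sdiff, not_and]
    intro _
    simp [hx'A]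
  have hNxB : G.neighborFinset x ∩ ((Finset.univ \ {x}) \ A) = {y} := by
    rw [hN]
    ext a
    simp only [Finset.mem_inter, Finset.mem_insert, Finset.mem_singleton]
    constructor
    · rintro ⟨rfl | rfl | rfl, ha⟩
      · exact absurd ha hx'B
      · rfl
      · exact absurd ha hzB
    · rintro rfl
      exact ⟨Or.inr (Or.inl rfl), hyB⟩
  by_cases hcase : (G.neighborFinset y ∩ ((Finset.univ \ {x}) \ A)).card ≤ 3
  · apply hno
    refine ⟨A, ffpart_extendB hA (by rw [hNxB]; simp) ?_⟩
    intro u hu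
    rw [hNxB, Finset.mem_singleton] at hu
    subst hu
    exact hcase
  · have hd4 : (G.neighborFinset y ∩ ((Finset.univ \ {x}) \ A)).card = 4 := by
      have := hA.2.2.1 y hyB
      omega
    have hznotin : z ∉ G.neighborFinset y ∩ ((Finset.univ \ {x}) \ A) := by
      simp only [Finset.mem_inter, not_and]
      exact fun _ => hzB
    have hxnotin2 : x ∉ insert z (G.neighborFinset y ∩ ((Finset.univ \ {x}) \ A)) := by
      simp only [Finset.mem_insert, Finset.mem_inter, not_or, not_and]
      refine ⟨?_, fun _ => hxB⟩
      intro h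
      subst h
      simpa using hA.1 hzA
    have hTsub2 : insert x (insert z (G.neighborFinset y ∩ ((Finset.univ \ {x}) \ A))) ⊆
        G.neighborFinset y := by
      intro a ha
      rcases Finset.mem_insert.mp ha with rfl | ha
      · exact (G.mem_neighborFinset y a).mpr hxy.symm
      · rcases Finset.mem_insert.mp ha with rfl | ha
        · exact (G.mem_neighborFinset y a).mpr hyz
        · exact Finset.mem_inter.mp ha |>.1
    have hc := card_le_degree_of_subset hTsub2
    rw [Finset.card_insert_of_notMem hxnotin2, Finset.card_insert_of_notMem hznotin, hd4]
      at hc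
    omega


lemma loneA_x' {x y z x' : V} {A : Finset V}
    (hno : ¬ ∃ A : Finset V, FFPartOn G Finset.univ A)
    (hA : FFPartOn G (Finset.univ \ {x}) A)
    (hxx' : G.Adj x x')
    (hN : G.neighborFinset x = {x', y, z})
    (hdx' : G.degree x' ≤ 4)
    (hx'A : x' ∈ A) (hyA : y ∉ A) (hzA : z ∉ A) : False := by
  have hxA : x ∉ A := by intro h; simpa using hA.1 h
  have hxB : x ∉ (Finset.univ \ {x}) \ A := by simp
  have hNxA : G.neighborFinset x ∩ A = {x'} := by
    rw [hN]
    ext a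
    simp only [Finset.mem_inter, Finset.mem_insert, Finset.mem_singleton]
    constructor
    · rintro ⟨rfl | rfl | rfl, ha⟩
      · rfl
      · exact absurd ha hyA
      · exact absurd ha hzA
    · rintro rfl
      exact ⟨Or.inl rfl, hx'A⟩
  by_cases hcase : (G.neighborFinset x' ∩ A).card ≤ 2
  · apply hno
    refine ⟨insert x A, ffpart_extendA hA (by rw [hNxA]; simp) ?_⟩
    intro u hu
    rw [hNxA, Finset.mem_singleton] at hu
    subst hu
    exact hcase
  have hd3 : (G.neighborFinset x' ∩ A).card = 3 := by
    have := hA.2.1 x' hx'A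
    omega
  have hxnotin : x ∉ G.neighborFinset x' ∩ A := by
    simp only [Finset.mem_inter, not_and]
    exact fun _ => hxA
  have hTsub : insert x (G.neighborFinset x' ∩ A) ⊆ G.neighborFinset x' := by
    intro a ha
    rcases Finset.mem_insert.mp ha with rfl | ha
    · exact (G.mem_neighborFinset x' a).mpr hxx'.symm
    · exact Finset.mem_inter.mp ha |>.1
  have hEq : insert x (G.neighborFinset x' ∩ A) = G.neighborFinset x' := by
    refine Finset.eq_of_subset_of_card_le hTsub ?_
    rw [Finset.card_insert_of_notMem hxnotin, hd3, SimpleGraph.card_neighborFinset_eq_degree]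
    omega
  have hNB : G.neighborFinset x' ∩ ((Finset.univ \ {x}) \ A) = ∅ := by
    refine Finset.eq_empty_iff_forall_notMem.mpr ?_
    intro a ha
    rw [Finset.mem_inter] at ha
    obtain ⟨haN, haB⟩ := ha
    rw [← hEq, Finset.mem_insert] at haN
    rcases haN with rfl | haN
    · exact hxB haB
    · exact (Finset.mem_sdiff.mp haB).2 (Finset.mem_inter.mp haN).2
  apply hno
  exact ⟨_, ffpart_move hA hx'A hNxA (by rw [hNB]; simp)
    (by intro w hw; rw [hNB] at hw; simp at hw)⟩

lemma loneB_x' {x y z x' : V} {A : Finset V}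
    (hno : ¬ ∃ A : Finset V, FFPartOn G Finset.univ A)
    (hA : FFPartOn G (Finset.univ \ {x}) A)
    (hxx' : G.Adj x x')
    (hN : G.neighborFinset x = {x', y, z})
    (hdx' : G.degree x' ≤ 4)
    (hx'A : x' ∉ A) (hyA : y ∈ A) (hzA : z ∈ A) : False := by
  have hxB : x ∉ (Finset.univ \ {x}) \ A := by simp
  have hx'B : x' ∈ (Finset.univ \ {x}) \ A := by
    simp only [Finset.mem_sdiff, Finset.mem_univ, Finset.mem_singleton, true_and]
    exact ⟨hxx'.ne', hx'A⟩
  have hyB : y ∉ (Finset.univ \ {x}) \ A := by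
    simp only [Finset.mem_sdiff, not_and]
    intro _
    simp [hyA]
  have hzB : z ∉ (Finset.univ \ {x}) \ A := by
    simp only [Finset.mem_sdiff, not_and]
    intro _
    simp [hzA]
  have hNxB : G.neighborFinset x ∩ ((Finset.univ \ {x}) \ A) = {x'} := by
    rw [hN]
    ext a
    simp only [Finset.mem_inter, Finset.mem_insert, Finset.mem_singleton]
    constructor
    · rintro ⟨rfl | rfl | rfl, ha⟩
      · rfl
      · exact absurd ha hyB
      · exact absurd ha hzB
    · rintro rfl
      exact ⟨Or.inl rfl, hx'B⟩
  by_cases hcase : (G.neighborFinset x' ∩ ((Finset.univ \ {x}) \ A)).card ≤ 3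
  · apply hno
    refine ⟨A, ffpart_extendB hA (by rw [hNxB]; simp) ?_⟩
    intro u hu
    rw [hNxB, Finset.mem_singleton] at hu
    subst hu
    exact hcase
  · have hd4 : (G.neighborFinset x' ∩ ((Finset.univ \ {x}) \ A)).card = 4 := by
      have := hA.2.2.1 x' hx'B
      omega
    have hxnotin : x ∉ G.neighborFinset x' ∩ ((Finset.univ \ {x}) \ A) := by
      simp only [Finset.mem_inter, not_and]
      exact fun _ => hxB
    have hTsub : insert x (G.neighborFinset x' ∩ ((Finset.univ \ {x}) \ A)) ⊆
        G.neighborFinset x' := by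
      intro a ha
      rcases Finset.mem_insert.mp ha with rfl | ha
      · exact (G.mem_neighborFinset x' a).mpr hxx'.symm
      · exact Finset.mem_inter.mp ha |>.1
    have hc := card_le_degree_of_subset hTsub
    rw [Finset.card_insert_of_notMem hxnotin, hd4] at hc
    omega


end Extend


/-- In a vertex-minimal graph with no `(𝓕₃,𝓕₄)`-partition, there is no triangle
`xyz` with `deg x = 3`, `deg y ≤ 5`, `deg z ≤ 5` whose third neighbor `x′` of
`x` (off the triangle) has degree at most 4. -/
theorem no_355_face_with_pendent_4 {V : Type*} [Fintype V] [DecidableEq V]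
    (G : SimpleGraph V) [DecidableRel G.Adj] (hmin : MinimalNoFF G) :
    ¬ ∃ x y z x' : V, G.Adj x y ∧ G.Adj y z ∧ G.Adj z x ∧
      G.Adj x x' ∧ x' ≠ y ∧ x' ≠ z ∧
      G.degree x = 3 ∧ G.degree y ≤ 5 ∧ G.degree z ≤ 5 ∧ G.degree x' ≤ 4 := by
  rintro ⟨x, y, z, x', hxy, hyz, hzx, hxx', hx'y, hx'z, hdx, hdy, hdz, hdx'⟩
  obtain ⟨hno, hdel⟩ := hmin
  obtain ⟨A, hA⟩ := hdel x
  have hyzne : y ≠ z := hyz.ne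
  have hcard3 : ({x', y, z} : Finset V).card = 3 := by
    rw [Finset.card_insert_of_notMem (by simp [hx'y, hx'z]),
        Finset.card_insert_of_notMem (by simp [hyzne]), Finset.card_singleton]
  have hsubN : ({x', y, z} : Finset V) ⊆ G.neighborFinset x := by
    intro a ha
    simp only [Finset.mem_insert, Finset.mem_singleton] at ha
    rcases ha with rfl | rfl | rfl
    · exact (G.mem_neighborFinset x a).mpr hxx'
    · exact (G.mem_neighborFinset x a).mpr hxy
    · exact (G.mem_neighborFinset x a).mpr hzx.symm
  have hN : G.neighborFinset x = {x', y, z} := by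
    refine (Finset.eq_of_subset_of_card_le hsubN ?_).symm
    rw [SimpleGraph.card_neighborFinset_eq_degree, hdx, hcard3]
  have hN2 : G.neighborFinset x = {x', z, y} := by
    rw [hN]
    ext a
    simp only [Finset.mem_insert, Finset.mem_singleton]
    tauto
  by_cases hy : y ∈ A <;> by_cases hz : z ∈ A <;> by_cases hx' : x' ∈ A
  · -- all three in A : put x on the B side
    apply hno
    have hNxB : G.neighborFinset x ∩ ((Finset.univ \ {x}) \ A) = ∅ := by
      refine Finset.eq_empty_iff_forall_notMem.mpr ?_
      intro a ha
      rw [Finset.mem_inter] at ha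
      obtain ⟨haN, haB⟩ := ha
      have haA := (Finset.mem_sdiff.mp haB).2
      rw [hN, Finset.mem_insert, Finset.mem_insert, Finset.mem_singleton] at haN
      rcases haN with rfl | rfl | rfl
      · exact haA hx'
      · exact haA hy
      · exact haA hz
    exact ⟨A, ffpart_extendB hA (by rw [hNxB]; simp)
      (by intro u hu; rw [hNxB] at hu; simp at hu)⟩
  · exact (loneB_x' hno hA hxx' hN hdx' hx' hy hz).elim
  · exact (loneB_y hno hA hzx.symm hyz.symm hxx'.ne' hN2 hdz hz hy hx').elim
  · exact (loneA_y hno hA hxy hyz hzx hxx'.ne' hN hdy hdz hy hz hx').elim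
  · exact (loneB_y hno hA hxy hyz hxx'.ne' hN hdy hy hz hx').elim
  · exact (loneA_y hno hA hzx.symm hyz.symm hxy.symm hxx'.ne' hN2 hdz hdy hz hy hx').elim
  · exact (loneA_x' hno hA hxx' hN hdx' hx' hy hz).elim
  · -- none in A : put x on the A side
    apply hno
    have hNxA : G.neighborFinset x ∩ A = ∅ := by
      refine Finset.eq_empty_iff_forall_notMem.mpr ?_
      intro a ha
      rw [Finset.mem_inter] at ha
      obtain ⟨haN, haA⟩ := ha
      rw [hN, Finset.mem_insert, Finset.mem_insert, Finset.mem_singleton] at haN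
      rcases haN with rfl | rfl | rfl
      · exact hx' haA
      · exact hy haA
      · exact hz haA
    exact ⟨insert x A, ffpart_extendA hA (by rw [hNxA]; simp)
      (by intro u hu; rw [hNxA] at hu; simp at hu)⟩
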